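/- arXiv:2605.02957 — 2 statements merged into one kernel-verified Lean document; each statement's English description precedes it below -/
import Mathlib

section
/- In the lower-bound construction, if X₃ ≠ X₄ with p₃ = p₄ ∉ Q₀ and both cross words a_{X₃} b_{X₄} and a_{X₄} b_{X₃} belong to √L(A_n), then case (4) applies to both, forcing r₃ = q₃ = q₄ and r₄ = q₄ = q₃, hence X₃ = X₄; contradiction. -/
/-- The function `l` of the lower-bound construction: `l(0)=1`, `l(1)=2`, else `0`. -/
def lf (n : ℕ) (hn : 6 ≤ n) (p : Fin n) : Fin n :=
  if p.val = 0 then ⟨1, by omega⟩ else if p.val = 1 then ⟨2, by omega⟩ else ⟨0, by omega⟩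

/-- The function `m` of the lower-bound construction: `m(3)=4`, `m(4)=5`, else `3`. -/
def mf (n : ℕ) (hn : 6 ≤ n) (p : Fin n) : Fin n :=
  if p.val = 3 then ⟨4, by omega⟩ else if p.val = 4 then ⟨5, by omega⟩ else ⟨3, by omega⟩

/-- The lower-bound NFA `A_n`: states `{0,…,n−1}`, initial states `{0,1,2}`,
final states `{3,4,5}`, alphabet `{a_X, b_X : X ∈ Q³}` encoded as
`Bool × Fin n × Fin n × Fin n` (`false` for `a_X`, `true` for `b_X`).
For `X = (p,q,r)`: `a_X` maps `l(p) ↦ q` and `p ↦ r`;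
`b_X` maps `q ↦ p` and `r ↦ m(p)`. -/
def lowerNFA (n : ℕ) (hn : 6 ≤ n) : NFA (Bool × Fin n × Fin n × Fin n) (Fin n) where
  step := fun s c =>
    match c with
    | (false, p, q, r) => (if s = lf n hn p then {q} else ∅) ∪ (if s = p then {r} else ∅)
    | (true, p, q, r) => (if s = q then {p} else ∅) ∪ (if s = r then {mf n hn p} else ∅)
  start := {s | s.val < 3}
  accept := {s | 3 ≤ s.val ∧ s.val < 6}


lemma lf_lt (n : ℕ) (hn : 6 ≤ n) (p : Fin n) : (lf n hn p).val < 3 := by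
  unfold lf; split_ifs <;> simp

lemma mf_ge (n : ℕ) (hn : 6 ≤ n) (p : Fin n) : 3 ≤ (mf n hn p).val := by
  unfold mf; split_ifs <;> simp

lemma mf_ne (n : ℕ) (hn : 6 ≤ n) (p : Fin n) : mf n hn p ≠ p := by
  unfold mf; split_ifs with h1 h2 <;> (intro h; apply_fun Fin.val at h; simp at h; omega)

lemma key_case4 (n : ℕ) (hn : 6 ≤ n) (p q₃ r₃ q₄ r₄ : Fin n) (hp0 : 3 ≤ p.val)
    (h : [((false : Bool), (p, q₃, r₃)), (true, (p, q₄, r₄)),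
          ((false : Bool), (p, q₃, r₃)), (true, (p, q₄, r₄))] ∈ (lowerNFA n hn).accepts) :
    q₃ = q₄ ∧ (r₃ = r₄ ∨ r₃ = q₄) := by
  rw [NFA.mem_accepts] at h
  obtain ⟨S, hS, hev⟩ := h
  simp only [NFA.evalFrom, List.foldl, NFA.mem_stepSet, lowerNFA, Set.mem_union,
    Set.mem_ite_empty_right, Set.mem_singleton_iff, Set.mem_setOf_eq] at hS hev
  obtain ⟨s3, ⟨s2, ⟨s1, ⟨s0, hs0, hstep1⟩, hstep2⟩, hstep3⟩, hstep4⟩ := hev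
  have h1 : s1 = q₃ := by
    rcases hstep1 with ⟨_, h⟩ | ⟨h, _⟩
    · exact h
    · exfalso; rw [h] at hs0; omega
  rw [h1] at hstep2
  rcases hstep2 with ⟨hq, hs2⟩ | ⟨hr, hs2⟩
  · rw [hs2] at hstep3
    have h3 : s3 = r₃ := by
      rcases hstep3 with ⟨h, _⟩ | ⟨_, h⟩
      · exfalso; have hl := lf_lt n hn p; rw [← h] at hl; omega
      · exact h
    rw [h3] at hstep4
    refine ⟨hq, ?_⟩
    rcases hstep4 with ⟨h, _⟩ | ⟨h, _⟩
    · right; exact h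
    · left; exact h
  · exfalso
    rw [hs2] at hstep3
    rcases hstep3 with ⟨h, _⟩ | ⟨h, _⟩
    · have hl := lf_lt n hn p; have hm := mf_ge n hn p; rw [h] at hm; omega
    · exact mf_ne n hn p h

/-- If `X₃ ≠ X₄` with `p₃ = p₄ ∉ Q₀` then the two cross words cannot both be
in `√L(A_n)` (case (4) applies to both, forcing `X₃ = X₄`). -/
theorem lowerNFA_no_cross_noninitial (n : ℕ) (hn : 6 ≤ n)
    (p₃ q₃ r₃ p₄ q₄ r₄ : Fin n)
    (hne : (p₃, q₃, r₃) ≠ (p₄, q₄, r₄)) (hp : p₃ = p₄) (hp0 : ¬ p₃.val < 3)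
    (h34 : [((false : Bool), (p₃, q₃, r₃)), (true, (p₄, q₄, r₄))] ∈
      {w : List (Bool × Fin n × Fin n × Fin n) | w ++ w ∈ (lowerNFA n hn).accepts})
    (h43 : [((false : Bool), (p₄, q₄, r₄)), (true, (p₃, q₃, r₃))] ∈
      {w : List (Bool × Fin n × Fin n × Fin n) | w ++ w ∈ (lowerNFA n hn).accepts}) :
    False := by
  subst hp
  simp only [Set.mem_setOf_eq, List.cons_append, List.nil_append] at h34 h43
  obtain ⟨hq34, hr34⟩ := key_case4 n hn p₃ q₃ r₃ q₄ r₄ (by omega) h34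
  obtain ⟨hq43, hr43⟩ := key_case4 n hn p₃ q₄ r₄ q₃ r₃ (by omega) h43
  have hr : r₃ = r₄ := by
    rcases hr34 with h | h
    · exact h
    · rcases hr43 with h' | h'
      · exact h'.symm
      · rw [h, ← hq34, ← h']
  exact hne (by rw [hq34, hr])
end

section
/- Every NFA recognizing √L(A_n), where A_n is the n-state lower-bound NFA (n ≥ 6), has at least n³ states. -/
variable {n : ℕ} {hn : 6 ≤ n}

lemma mem_step_a {s t p q r : Fin n} :
    t ∈ (lowerNFA n hn).step s (false, p, q, r) ↔ (s = lf n hn p ∧ t = q) ∨ (s = p ∧ t = r) := by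
  simp only [lowerNFA, Set.mem_union]
  split_ifs <;> simp only [Set.mem_singleton_iff, Set.mem_empty_iff_false, or_false, false_or] <;> tauto

lemma mem_step_b {s t p q r : Fin n} :
    t ∈ (lowerNFA n hn).step s (true, p, q, r) ↔ (s = q ∧ t = p) ∨ (s = r ∧ t = mf n hn p) := by
  simp only [lowerNFA, Set.mem_union]
  split_ifs <;> simp only [Set.mem_singleton_iff, Set.mem_empty_iff_false, or_false, false_or] <;> tauto

lemma acc_iff {p q r p' q' r' : Fin n} :
    ([(false,p,q,r),(true,p',q',r'),(false,p,q,r),(true,p',q',r')] ∈ (lowerNFA n hn).accepts) ↔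
    ∃ s0 s1 s2 s3 s4 : Fin n, s0.val < 3 ∧
      ((s0 = lf n hn p ∧ s1 = q) ∨ (s0 = p ∧ s1 = r)) ∧
      ((s1 = q' ∧ s2 = p') ∨ (s1 = r' ∧ s2 = mf n hn p')) ∧
      ((s2 = lf n hn p ∧ s3 = q) ∨ (s2 = p ∧ s3 = r)) ∧
      ((s3 = q' ∧ s4 = p') ∨ (s3 = r' ∧ s4 = mf n hn p')) ∧
      3 ≤ s4.val ∧ s4.val < 6 := by
  rw [NFA.mem_accepts]
  simp only [NFA.evalFrom, List.foldl_cons, List.foldl_nil, NFA.mem_stepSet, mem_step_a, mem_step_b]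
  constructor
  · rintro ⟨s4, hacc, s3, ⟨s2, ⟨s1, ⟨s0, h0, h1⟩, h2⟩, h3⟩, h4⟩
    exact ⟨s0, s1, s2, s3, s4, h0, h1, h2, h3, h4, hacc⟩
  · rintro ⟨s0, s1, s2, s3, s4, h0, h1, h2, h3, h4, hacc⟩
    exact ⟨s4, hacc, s3, ⟨s2, ⟨s1, ⟨s0, h0, h1⟩, h2⟩, h3⟩, h4⟩

lemma lf_val {p : Fin n} : (lf n hn p).val = if p.val = 0 then 1 else if p.val = 1 then 2 else 0 := by
  unfold lf; split_ifs <;> rfl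

lemma mf_val {p : Fin n} : (mf n hn p).val = if p.val = 3 then 4 else if p.val = 4 then 5 else 3 := by
  unfold mf; split_ifs <;> rfl

lemma lf_spec (p : Fin n) : (p.val = 0 ∧ (lf n hn p).val = 1) ∨ (p.val = 1 ∧ (lf n hn p).val = 2) ∨ ((2 ≤ p.val) ∧ (lf n hn p).val = 0) := by
  unfold lf; split_ifs <;> simp_all <;> omega

lemma mf_spec (p : Fin n) : (p.val = 3 ∧ (mf n hn p).val = 4) ∨ (p.val = 4 ∧ (mf n hn p).val = 5) ∨ ((p.val ≠ 3 ∧ p.val ≠ 4) ∧ (mf n hn p).val = 3) := by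
  unfold mf; split_ifs <;> simp_all

lemma key {p q r p' q' r' : Fin n}
    (h1 : [(false,p,q,r),(true,p',q',r'),(false,p,q,r),(true,p',q',r')] ∈ (lowerNFA n hn).accepts)
    (h2 : [(false,p',q',r'),(true,p,q,r),(false,p',q',r'),(true,p,q,r)] ∈ (lowerNFA n hn).accepts) :
    p = p' ∧ q = q' ∧ r = r' := by
  rw [acc_iff] at h1 h2
  obtain ⟨s0,s1,s2,s3,s4,h0,hA,hB,hC,hD,hacc⟩ := h1
  obtain ⟨t0,t1,t2,t3,t4,g0,gA,gB,gC,gD,gacc⟩ := h2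
  have L1 := lf_spec (hn := hn) p; have L2 := lf_spec (hn := hn) p'
  have M1 := mf_spec (hn := hn) p; have M2 := mf_spec (hn := hn) p'
  rcases hA with ⟨rfl,rfl⟩|⟨rfl,rfl⟩ <;> rcases hB with ⟨e1,rfl⟩|⟨e1,rfl⟩ <;>
    rcases hC with ⟨e2,rfl⟩|⟨e2,rfl⟩ <;> rcases hD with ⟨e3,rfl⟩|⟨e3,rfl⟩ <;>
    rcases gA with ⟨rfl,rfl⟩|⟨rfl,rfl⟩ <;> rcases gB with ⟨f1,rfl⟩|⟨f1,rfl⟩ <;>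
    rcases gC with ⟨f2,rfl⟩|⟨f2,rfl⟩ <;> rcases gD with ⟨f3,rfl⟩|⟨f3,rfl⟩ <;>
    simp only [Fin.ext_iff] at * <;>
    omega

lemma acc_self {p q r : Fin n} :
    [(false,p,q,r),(true,p,q,r),(false,p,q,r),(true,p,q,r)] ∈ (lowerNFA n hn).accepts := by
  rw [acc_iff]
  refine ⟨lf n hn p, q, p, r, mf n hn p, ?_, Or.inl ⟨rfl, rfl⟩, Or.inl ⟨rfl, rfl⟩,
    Or.inr ⟨rfl, rfl⟩, Or.inr ⟨rfl, rfl⟩, ?_, ?_⟩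
  · have := lf_spec (hn := hn) p; omega
  · have := mf_spec (hn := hn) p; omega
  · have := mf_spec (hn := hn) p; omega


/-- Every NFA recognizing `√L(A_n)` has at least `n³` states. -/
theorem lowerNFA_sqrt_states (n : ℕ) (hn : 6 ≤ n)
    (τ : Type) [Fintype τ] (N : NFA (Bool × Fin n × Fin n × Fin n) τ)
    (hN : N.accepts = {w : List (Bool × Fin n × Fin n × Fin n) |
      w ++ w ∈ (lowerNFA n hn).accepts}) :
    n ^ 3 ≤ Fintype.card τ := by
  have hself : ∀ X : Fin n × Fin n × Fin n, ∃ t, t ∈ N.stepSet N.start (false, X) ∧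
      ∃ s, s ∈ N.accept ∧ s ∈ N.step t (true, X) := by
    rintro ⟨p, q, r⟩
    have hw : [((false, p, q, r) : Bool × Fin n × Fin n × Fin n), (true, p, q, r)] ∈ N.accepts := by
      rw [hN]; exact acc_self
    rw [NFA.mem_accepts] at hw
    obtain ⟨s, hs, hmem⟩ := hw
    rw [show N.evalFrom N.start [(false, p, q, r), (true, p, q, r)] =
        N.stepSet (N.stepSet N.start (false, p, q, r)) (true, p, q, r) from rfl,
      NFA.mem_stepSet] at hmem
    obtain ⟨t, ht, hst⟩ := hmem
    exact ⟨t, ht, s, hs, hst⟩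
  choose F hF1 hF2 using hself
  have hmix : ∀ U V : Fin n × Fin n × Fin n, F U = F V →
      [((false, U) : Bool × Fin n × Fin n × Fin n), (true, V)] ∈ N.accepts := by
    intro U V h
    obtain ⟨s, hs, hstep⟩ := hF2 V
    rw [NFA.mem_accepts]
    refine ⟨s, hs, ?_⟩
    rw [show N.evalFrom N.start [(false, U), (true, V)] =
        N.stepSet (N.stepSet N.start (false, U)) (true, V) from rfl, NFA.mem_stepSet]
    exact ⟨F U, hF1 U, by rw [h]; exact hstep⟩
  have hinj : Function.Injective F := by
    rintro ⟨p, q, r⟩ ⟨p', q', r'⟩ hXY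
    have h1 := hmix _ _ hXY
    have h2 := hmix _ _ hXY.symm
    rw [hN] at h1 h2
    obtain ⟨hp, hq, hr⟩ := key (hn := hn) h1 h2
    simp [hp, hq, hr]
  calc n ^ 3 = Fintype.card (Fin n × Fin n × Fin n) := by
        simp [Fintype.card_prod]; ring
    _ ≤ Fintype.card τ := Fintype.card_le_of_injective F hinj
end
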